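/- arXiv:1909.03479 — 4 statements merged into one kernel-verified Lean document; each statement's English description precedes it below -/
import Mathlib

section
/- Let k ≥ 1, let R₁ and R₂ be symmetric positive definite k×k real matrices, let a, b ≥ 0 be real numbers, and set R = aR₁ + bR₂. Then for all vectors x, y ∈ ℝᵏ one has xᵀR R₁⁻¹R₂ x + yᵀR R₂⁻¹R₁ y ≥ xᵀR y + yᵀR x. -/
/-!
Both sides are linear in `(a, b)`. The `a`-part of the difference is the square
`(x - R₂⁻¹R₁y)ᵀ R₂ (x - R₂⁻¹R₁y) ≥ 0`, and the `b`-part is `(y - R₁⁻¹R₂x)ᵀ R₁ (y - R₁⁻¹R₂x) ≥ 0`.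
-/

open Matrix

theorem Matrix.PosDef.dotProduct_mulVec_add_le {m n : Type*} [Fintype m] [Fintype n]
    [DecidableEq n] {M : Matrix n n ℝ} (hM : M.PosDef) (N : Matrix n m ℝ) (x : n → ℝ)
    (y : m → ℝ) :
    x ⬝ᵥ (N *ᵥ y) + y ⬝ᵥ (Nᵀ *ᵥ x) ≤ x ⬝ᵥ (M *ᵥ x) + y ⬝ᵥ ((Nᵀ * M⁻¹ * N) *ᵥ y) := by
  have hMinv : M * M⁻¹ = 1 := mul_nonsing_inv M (isUnit_iff_isUnit_det M |>.mp hM.isUnit)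
  have hMsymm : Mᵀ = M := (isHermitian_iff_isSymm.mp hM.isHermitian).eq
  set w := M⁻¹ *ᵥ (N *ᵥ y)
  have hMw : M *ᵥ w = N *ᵥ y := by rw [mulVec_mulVec, hMinv, one_mulVec]
  have hsq : 0 ≤ (x - w) ⬝ᵥ (M *ᵥ (x - w)) := by
    simpa using hM.posSemidef.dotProduct_mulVec_nonneg (x - w)
  have hwMx : w ⬝ᵥ (M *ᵥ x) = x ⬝ᵥ (N *ᵥ y) := by
    rw [dotProduct_mulVec w, ← mulVec_transpose, hMsymm, hMw, dotProduct_comm]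
  have hwNy : w ⬝ᵥ (N *ᵥ y) = y ⬝ᵥ ((Nᵀ * M⁻¹ * N) *ᵥ y) := by
    rw [Matrix.mul_assoc, ← mulVec_mulVec, ← mulVec_mulVec, dotProduct_mulVec y, vecMul_transpose,
      dotProduct_comm]
  have hNT : y ⬝ᵥ (Nᵀ *ᵥ x) = x ⬝ᵥ (N *ᵥ y) := by
    rw [dotProduct_mulVec, vecMul_transpose, dotProduct_comm]
  rw [mulVec_sub, hMw, sub_dotProduct, dotProduct_sub, dotProduct_sub, hwMx, hwNy] at hsq
  linarith

theorem Matrix.smul_add_smul_mul_nonsing_inv_mul {n α : Type*} [Fintype n] [DecidableEq n]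
    [CommRing α] {A : Matrix n n α} (hA : IsUnit A.det) (B C : Matrix n n α) (a b : α) :
    (a • A + b • B) * A⁻¹ * C = a • C + b • (B * A⁻¹ * C) := by
  rw [Matrix.add_mul, Matrix.add_mul, Matrix.smul_mul, Matrix.smul_mul, mul_nonsing_inv A hA,
    Matrix.one_mul, Matrix.smul_mul, Matrix.smul_mul]

theorem stmt_1_general (k : ℕ) (R₁ R₂ : Matrix (Fin k) (Fin k) ℝ)
    (hR₁symm : R₁.IsSymm) (hR₂symm : R₂.IsSymm)
    (hR₁ : R₁.PosDef) (hR₂ : R₂.PosDef)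
    (a b : ℝ) (ha : 0 ≤ a) (hb : 0 ≤ b) (R : Matrix (Fin k) (Fin k) ℝ)
    (hR : R = a • R₁ + b • R₂) :
    ∀ x y : Fin k → ℝ,
      x ⬝ᵥ (R *ᵥ y) + y ⬝ᵥ (R *ᵥ x) ≤
        x ⬝ᵥ ((R * R₁⁻¹ * R₂) *ᵥ x) + y ⬝ᵥ ((R * R₂⁻¹ * R₁) *ᵥ y) := by
  intro x y
  have hR₁inv : IsUnit R₁.det := (isUnit_iff_isUnit_det R₁).mp hR₁.isUnit
  have hR₂inv : IsUnit R₂.det := (isUnit_iff_isUnit_det R₂).mp hR₂.isUnit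
  have ha_part := hR₂.dotProduct_mulVec_add_le R₁ x y
  have hb_part := hR₁.dotProduct_mulVec_add_le R₂ y x
  rw [hR₁symm.eq] at ha_part
  rw [hR₂symm.eq] at hb_part
  rw [hR, smul_add_smul_mul_nonsing_inv_mul hR₁inv, add_comm (a • R₁),
    smul_add_smul_mul_nonsing_inv_mul hR₂inv]
  simp only [add_mulVec, smul_mulVec, dotProduct_add, dotProduct_smul, smul_eq_mul]
  linarith [mul_le_mul_of_nonneg_left ha_part ha, mul_le_mul_of_nonneg_left hb_part hb]

/-- For symmetric positive definite matrices `R₁, R₂`, nonnegative reals `a, b`, and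
`R = aR₁ + bR₂`, one has `xᵀRR₁⁻¹R₂x + yᵀRR₂⁻¹R₁y ≥ xᵀRy + yᵀRx` for all vectors. -/
theorem stmt_1 (k : ℕ) (hk : 1 ≤ k) (R₁ R₂ : Matrix (Fin k) (Fin k) ℝ)
    (hR₁symm : R₁.IsSymm) (hR₂symm : R₂.IsSymm)
    (hR₁ : R₁.PosDef) (hR₂ : R₂.PosDef)
    (a b : ℝ) (ha : 0 ≤ a) (hb : 0 ≤ b) (R : Matrix (Fin k) (Fin k) ℝ)
    (hR : R = a • R₁ + b • R₂) :
    ∀ x y : Fin k → ℝ,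
      x ⬝ᵥ (R *ᵥ y) + y ⬝ᵥ (R *ᵥ x) ≤
        x ⬝ᵥ ((R * R₁⁻¹ * R₂) *ᵥ x) + y ⬝ᵥ ((R * R₂⁻¹ * R₁) *ᵥ y) :=
  stmt_1_general k R₁ R₂ hR₁symm hR₂symm hR₁ hR₂ a b ha hb R hR
end

section
/- Let n, k ≥ 1. Let R₁, R₂ be symmetric positive definite k×k real matrices, L₁, L₂ symmetric n×n real matrices, and S₁, S₂ real k×n matrices such that Lθ − SθᵀRθ⁻¹Sθ is positive semidefinite for θ = 1, 2. Let m₁, m₂ > 0 and λ ∈ [0,1]. Set R^λ = λm₁R₁ + (1−λ)m₂R₂ (which is positive definite, hence invertible), let S = [m₁S₁ m₂S₂] be the k×(2n) block matrix, let L̃ be the (2n)×(2n) block diagonal matrix diag(m₁L₁, m₂L₂), and let Λ be the (2n)×(2n) block diagonal matrix diag(λIₙ, (1−λ)Iₙ). Then the (2n)×(2n) matrix L̃Λ − ΛSᵀ(R^λ)⁻¹SΛ is positive semidefinite, i.e. [xᵀ yᵀ](L̃Λ − ΛSᵀ(R^λ)⁻¹SΛ)[x; y] ≥ 0 for all x,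 y ∈ ℝⁿ. -/
open Matrix

private lemma myPosDef_smul {k : ℕ} {c : ℝ} (hc : 0 < c) {M : Matrix (Fin k) (Fin k) ℝ}
    (hM : M.PosDef) : (c • M).PosDef := by
  refine Matrix.PosDef.of_dotProduct_mulVec_pos ?_ (fun x hx => ?_)
  · unfold Matrix.IsHermitian
    rw [conjTranspose_smul, star_trivial, hM.1]
  · rw [smul_mulVec, dotProduct_smul, smul_eq_mul]
    exact mul_pos hc (hM.dotProduct_mulVec_pos hx)

private lemma myPosSemidef_smul {k : ℕ} {c : ℝ} (hc : 0 ≤ c) {M : Matrix (Fin k) (Fin k) ℝ}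
    (hM : M.PosSemidef) : (c • M).PosSemidef := by
  refine Matrix.PosSemidef.of_dotProduct_mulVec_nonneg ?_ (fun x => ?_)
  · unfold Matrix.IsHermitian
    rw [conjTranspose_smul, star_trivial, hM.1]
  · rw [smul_mulVec, dotProduct_smul, smul_eq_mul]
    exact mul_nonneg hc (hM.dotProduct_mulVec_nonneg x)

private lemma expand_q {k : ℕ} (R : Matrix (Fin k) (Fin k) ℝ) (hsym : R.IsSymm)
    (hdet : IsUnit R.det) (u v : Fin k → ℝ) :
    (u - R *ᵥ v) ⬝ᵥ (R⁻¹ *ᵥ (u - R *ᵥ v))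
      = u ⬝ᵥ (R⁻¹ *ᵥ u) - 2 * (u ⬝ᵥ v) + v ⬝ᵥ (R *ᵥ v) := by
  have h1 : R⁻¹ *ᵥ (R *ᵥ v) = v := by
    rw [mulVec_mulVec, nonsing_inv_mul _ hdet, one_mulVec]
  have h2 : (R *ᵥ v) ⬝ᵥ (R⁻¹ *ᵥ u) = u ⬝ᵥ v := by
    rw [dotProduct_comm, dotProduct_mulVec]
    have : (R⁻¹ *ᵥ u) ᵥ* R = u := by
      rw [← mulVec_transpose, hsym.eq, mulVec_mulVec, mul_nonsing_inv _ hdet, one_mulVec]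
    rw [this, dotProduct_comm]
  have h3 : (R *ᵥ v) ⬝ᵥ v = v ⬝ᵥ (R *ᵥ v) := dotProduct_comm _ _
  rw [mulVec_sub, h1, sub_dotProduct, dotProduct_sub, dotProduct_sub, h2, h3]
  ring

private lemma key_convex {k : ℕ} (R₁ R₂ : Matrix (Fin k) (Fin k) ℝ)
    (hR₁s : R₁.IsSymm) (hR₂s : R₂.IsSymm) (hR₁ : R₁.PosDef) (hR₂ : R₂.PosDef)
    (a b : ℝ) (ha : 0 ≤ a) (hb : 0 ≤ b)
    (Rl : Matrix (Fin k) (Fin k) ℝ) (hRl : Rl = a • R₁ + b • R₂) (hRlpd : Rl.PosDef)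
    (u₁ u₂ : Fin k → ℝ) :
    (a • u₁ + b • u₂) ⬝ᵥ (Rl⁻¹ *ᵥ (a • u₁ + b • u₂))
      ≤ a * (u₁ ⬝ᵥ (R₁⁻¹ *ᵥ u₁)) + b * (u₂ ⬝ᵥ (R₂⁻¹ *ᵥ u₂)) := by
  have hdet1 : IsUnit R₁.det := isUnit_iff_ne_zero.mpr hR₁.det_pos.ne'
  have hdet2 : IsUnit R₂.det := isUnit_iff_ne_zero.mpr hR₂.det_pos.ne'
  have hdetl : IsUnit Rl.det := isUnit_iff_ne_zero.mpr hRlpd.det_pos.ne'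
  set w : Fin k → ℝ := a • u₁ + b • u₂ with hw
  set v : Fin k → ℝ := Rl⁻¹ *ᵥ w with hv
  have hRlw : Rl *ᵥ v = w := by
    rw [hv, mulVec_mulVec, mul_nonsing_inv _ hdetl, one_mulVec]
  have E₁ : 0 ≤ u₁ ⬝ᵥ (R₁⁻¹ *ᵥ u₁) - 2 * (u₁ ⬝ᵥ v) + v ⬝ᵥ (R₁ *ᵥ v) := by
    rw [← expand_q R₁ hR₁s hdet1 u₁ v]
    simpa using hR₁.inv.posSemidef.dotProduct_mulVec_nonneg (u₁ - R₁ *ᵥ v)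
  have E₂ : 0 ≤ u₂ ⬝ᵥ (R₂⁻¹ *ᵥ u₂) - 2 * (u₂ ⬝ᵥ v) + v ⬝ᵥ (R₂ *ᵥ v) := by
    rw [← expand_q R₂ hR₂s hdet2 u₂ v]
    simpa using hR₂.inv.posSemidef.dotProduct_mulVec_nonneg (u₂ - R₂ *ᵥ v)
  have e1 : a * (v ⬝ᵥ (R₁ *ᵥ v)) + b * (v ⬝ᵥ (R₂ *ᵥ v)) = w ⬝ᵥ v := by
    rw [dotProduct_comm w v, ← hRlw, hRl, add_mulVec, smul_mulVec, smul_mulVec,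
      dotProduct_add, dotProduct_smul, dotProduct_smul, smul_eq_mul, smul_eq_mul]
  have e2 : a * (u₁ ⬝ᵥ v) + b * (u₂ ⬝ᵥ v) = w ⬝ᵥ v := by
    rw [hw, add_dotProduct, smul_dotProduct, smul_dotProduct, smul_eq_mul, smul_eq_mul]
  have hE1 := mul_nonneg ha E₁
  have hE2 := mul_nonneg hb E₂
  show w ⬝ᵥ v ≤ _
  nlinarith [hE1, hE2, e1, e2]

/-- Lemma 4.2 of the paper: with `R^λ = λm₁R₁ + (1−λ)m₂R₂`, the block matrix
`S = [m₁S₁  m₂S₂]`, `L̃ = diag(m₁L₁, m₂L₂)` and `Λ = diag(λIₙ, (1−λ)Iₙ)`, the matrix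
`L̃Λ − ΛSᵀ(R^λ)⁻¹SΛ` is positive semidefinite, provided `Lθ − SθᵀRθ⁻¹Sθ ⪰ 0` for
`θ = 1, 2` and `R₁, R₂` are symmetric positive definite. -/
theorem stmt_2 (n k : ℕ) (hn : 1 ≤ n) (hk : 1 ≤ k)
    (R₁ R₂ : Matrix (Fin k) (Fin k) ℝ) (hR₁symm : R₁.IsSymm) (hR₂symm : R₂.IsSymm)
    (hR₁ : R₁.PosDef) (hR₂ : R₂.PosDef)
    (L₁ L₂ : Matrix (Fin n) (Fin n) ℝ) (hL₁ : L₁.IsSymm) (hL₂ : L₂.IsSymm)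
    (S₁ S₂ : Matrix (Fin k) (Fin n) ℝ)
    (h₁ : (L₁ - S₁ᵀ * R₁⁻¹ * S₁).PosSemidef)
    (h₂ : (L₂ - S₂ᵀ * R₂⁻¹ * S₂).PosSemidef)
    (m₁ m₂ : ℝ) (hm₁ : 0 < m₁) (hm₂ : 0 < m₂)
    (l : ℝ) (hl : l ∈ Set.Icc (0 : ℝ) 1)
    (Rl : Matrix (Fin k) (Fin k) ℝ) (hRl : Rl = (l * m₁) • R₁ + ((1 - l) * m₂) • R₂)
    (S : Matrix (Fin k) (Fin n ⊕ Fin n) ℝ) (hS : S = fromCols (m₁ • S₁) (m₂ • S₂))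
    (Ltil : Matrix (Fin n ⊕ Fin n) (Fin n ⊕ Fin n) ℝ)
    (hLtil : Ltil = fromBlocks (m₁ • L₁) 0 0 (m₂ • L₂))
    (Λ : Matrix (Fin n ⊕ Fin n) (Fin n ⊕ Fin n) ℝ)
    (hΛ : Λ = fromBlocks (l • (1 : Matrix (Fin n) (Fin n) ℝ)) 0 0
            ((1 - l) • (1 : Matrix (Fin n) (Fin n) ℝ))) :
    ∀ x y : Fin n → ℝ,
      0 ≤ (Sum.elim x y) ⬝ᵥ ((Ltil * Λ - Λ * Sᵀ * Rl⁻¹ * S * Λ) *ᵥ (Sum.elim x y)) := by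
  obtain ⟨hl0, hl1⟩ := hl
  have ha : (0:ℝ) ≤ l * m₁ := mul_nonneg hl0 hm₁.le
  have hb : (0:ℝ) ≤ (1 - l) * m₂ := mul_nonneg (by linarith) hm₂.le
  have hRlpd : Rl.PosDef := by
    rcases eq_or_lt_of_le hl0 with h | h
    · rw [hRl, ← h]
      simp only [zero_mul, zero_smul, zero_add, sub_zero, one_mul]
      exact myPosDef_smul hm₂ hR₂
    · rw [hRl]
      exact (myPosDef_smul (mul_pos h hm₁) hR₁).add_posSemidef
        (myPosSemidef_smul hb hR₂.posSemidef)
  intro x y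
  have hΛz : Λ *ᵥ Sum.elim x y = Sum.elim (l • x) ((1 - l) • y) := by
    rw [hΛ, fromBlocks_mulVec]
    simp [smul_mulVec]
  have hSz : S *ᵥ (Λ *ᵥ Sum.elim x y)
      = (l * m₁) • (S₁ *ᵥ x) + ((1 - l) * m₂) • (S₂ *ᵥ y) := by
    rw [hΛz, hS, fromCols_mulVec_sumElim]
    simp [smul_mulVec, mulVec_smul, smul_smul, mul_comm]
  have hΛsym : Λᵀ = Λ := by
    rw [hΛ, fromBlocks_transpose]
    simp
  -- the L-part of the quadratic form
  have hA : Sum.elim x y ⬝ᵥ ((Ltil * Λ) *ᵥ Sum.elim x y)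
      = (l * m₁) * (x ⬝ᵥ (L₁ *ᵥ x)) + ((1 - l) * m₂) * (y ⬝ᵥ (L₂ *ᵥ y)) := by
    rw [← mulVec_mulVec, hΛz, hLtil, fromBlocks_mulVec, sumElim_dotProduct_sumElim]
    simp [smul_mulVec, mulVec_smul, smul_smul, dotProduct_smul, smul_eq_mul]
  -- the S-part of the quadratic form
  have hB : Sum.elim x y ⬝ᵥ ((Λ * Sᵀ * Rl⁻¹ * S * Λ) *ᵥ Sum.elim x y)
      = (S *ᵥ (Λ *ᵥ Sum.elim x y)) ⬝ᵥ (Rl⁻¹ *ᵥ (S *ᵥ (Λ *ᵥ Sum.elim x y))) := by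
    have hcomm : ∀ z, z ᵥ* Λ = Λ *ᵥ z := fun z => by conv_lhs => rw [← hΛsym, vecMul_transpose]
    simp only [← mulVec_mulVec]
    rw [dotProduct_mulVec _ Λ, hcomm, dotProduct_mulVec _ Sᵀ, vecMul_transpose]
  -- bounds from h₁ and h₂
  have hq₁ : (S₁ *ᵥ x) ⬝ᵥ (R₁⁻¹ *ᵥ (S₁ *ᵥ x)) ≤ x ⬝ᵥ (L₁ *ᵥ x) := by
    have h := h₁.dotProduct_mulVec_nonneg x
    simp only [star_trivial, sub_mulVec, dotProduct_sub, sub_nonneg] at h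
    have e : x ⬝ᵥ ((S₁ᵀ * R₁⁻¹ * S₁) *ᵥ x) = (S₁ *ᵥ x) ⬝ᵥ (R₁⁻¹ *ᵥ (S₁ *ᵥ x)) := by
      simp only [← mulVec_mulVec]
      rw [dotProduct_mulVec _ S₁ᵀ, vecMul_transpose]
    rw [e] at h
    exact h
  have hq₂ : (S₂ *ᵥ y) ⬝ᵥ (R₂⁻¹ *ᵥ (S₂ *ᵥ y)) ≤ y ⬝ᵥ (L₂ *ᵥ y) := by
    have h := h₂.dotProduct_mulVec_nonneg y
    simp only [star_trivial, sub_mulVec, dotProduct_sub, sub_nonneg] at h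
    have e : y ⬝ᵥ ((S₂ᵀ * R₂⁻¹ * S₂) *ᵥ y) = (S₂ *ᵥ y) ⬝ᵥ (R₂⁻¹ *ᵥ (S₂ *ᵥ y)) := by
      simp only [← mulVec_mulVec]
      rw [dotProduct_mulVec _ S₂ᵀ, vecMul_transpose]
    rw [e] at h
    exact h
  have hkey := key_convex R₁ R₂ hR₁symm hR₂symm hR₁ hR₂ (l * m₁) ((1 - l) * m₂) ha hb
    Rl hRl hRlpd (S₁ *ᵥ x) (S₂ *ᵥ y)
  rw [sub_mulVec, dotProduct_sub, hA, hB, hSz]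
  have hc1 := mul_le_mul_of_nonneg_left hq₁ ha
  have hc2 := mul_le_mul_of_nonneg_left hq₂ hb
  linarith
end

section
/- Let Θ be a Polish space and K a nonempty compact subset of P(Θ) in the topology of weak convergence. Let g₀ and ĝ be continuous bounded real functions on Θ, and for each ρ ∈ (0,1) let g_ρ : Θ → ℝ be continuous and bounded, such that sup_{θ∈Θ} | ρ⁻¹(g_ρ(θ) − g₀(θ)) − ĝ(θ) | → 0 as ρ → 0⁺. Define J(ρ) = sup_{Q∈K} ∫_Θ g_ρ dQ for ρ ∈ [0,1), and let K₀ = { Q ∈ K : ∫_Θ g₀ dQ = J(0) }. Then the limit lim_{ρ→0⁺} (J(ρ) − J(0))/ρ exists and equals max_{Q∈K₀} ∫_Θ ĝ dQ; in particular there exists Q̄ ∈ K₀ with lim_{ρ→0⁺} (J(ρ) − J(0))/ρ = ∫_Θ ĝ dQ̄. -/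
open MeasureTheory Filter Topology

/-- The robust value function `J(ρ) = sup_{Q ∈ K} ∫ g_ρ dQ`. -/
noncomputable def Jval {Θ : Type*} [MeasurableSpace Θ] (K : Set (ProbabilityMeasure Θ))
    (g : ℝ → Θ → ℝ) (ρ : ℝ) : ℝ :=
  sSup ((fun Q : ProbabilityMeasure Θ => ∫ θ, g ρ θ ∂(Q : Measure Θ)) '' K)

/-- Danskin-type envelope theorem (Lemma 3.5 of the paper): if
`ρ⁻¹(g_ρ − g₀) → ĝ` uniformly on `Θ` as `ρ → 0⁺`, then the one-sided derivative of
`J(ρ) = sup_{Q∈K} ∫ g_ρ dQ` at `ρ = 0` exists and equals the maximum of `∫ ĝ dQ` over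
the set `K₀` of maximizers of `∫ g₀ dQ` on `K`, the maximum being attained at
some `Q̄ ∈ K₀`. -/
theorem stmt_8 {Θ : Type*} [MetricSpace Θ] [PolishSpace Θ]
    [MeasurableSpace Θ] [BorelSpace Θ]
    (K : Set (ProbabilityMeasure Θ)) (hKne : K.Nonempty) (hK : IsCompact K)
    (g : ℝ → Θ → ℝ) (ghat : Θ → ℝ)
    (hg0 : Continuous (g 0)) (hg0b : ∃ C : ℝ, ∀ θ, |g 0 θ| ≤ C)
    (hghat : Continuous ghat) (hghatb : ∃ C : ℝ, ∀ θ, |ghat θ| ≤ C)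
    (hg : ∀ ρ ∈ Set.Ioo (0 : ℝ) 1, Continuous (g ρ))
    (hgb : ∀ ρ ∈ Set.Ioo (0 : ℝ) 1, ∃ C : ℝ, ∀ θ, |g ρ θ| ≤ C)
    (hunif : TendstoUniformly (fun ρ θ => (g ρ θ - g 0 θ) / ρ) ghat
      (𝓝[Set.Ioo (0 : ℝ) 1] 0))
    (K₀ : Set (ProbabilityMeasure Θ))
    (hK₀ : K₀ = {Q ∈ K | (∫ θ, g 0 θ ∂(Q : Measure Θ)) = Jval K g 0}) :
    ∃ Qbar ∈ K₀,
      (∀ Q ∈ K₀, (∫ θ, ghat θ ∂(Q : Measure Θ)) ≤ ∫ θ, ghat θ ∂(Qbar : Measure Θ)) ∧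
      Tendsto (fun ρ => (Jval K g ρ - Jval K g 0) / ρ) (𝓝[Set.Ioo (0 : ℝ) 1] 0)
        (𝓝 (∫ θ, ghat θ ∂(Qbar : Measure Θ))) := by
  classical
  obtain ⟨C0, hC0⟩ := hg0b
  obtain ⟨Ch, hCh⟩ := hghatb
  set l := 𝓝[Set.Ioo (0 : ℝ) 1] (0 : ℝ) with hl
  -- bounded continuous versions
  set f0 : BoundedContinuousFunction Θ ℝ :=
    BoundedContinuousFunction.ofNormedAddCommGroup (g 0) hg0 C0
      (fun θ => by simpa [Real.norm_eq_abs] using hC0 θ) with hf0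
  set fh : BoundedContinuousFunction Θ ℝ :=
    BoundedContinuousFunction.ofNormedAddCommGroup ghat hghat Ch
      (fun θ => by simpa [Real.norm_eq_abs] using hCh θ) with hfh
  set φ0 : ProbabilityMeasure Θ → ℝ := fun Q => ∫ θ, g 0 θ ∂(Q : Measure Θ) with hφ0def
  set φh : ProbabilityMeasure Θ → ℝ := fun Q => ∫ θ, ghat θ ∂(Q : Measure Θ) with hφhdef
  have hφ0c : Continuous φ0 := by
    have := MeasureTheory.ProbabilityMeasure.continuous_integral_boundedContinuousFunction (X := Θ) f0
    simpa [hf0] using this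
  have hφhc : Continuous φh := by
    have := MeasureTheory.ProbabilityMeasure.continuous_integral_boundedContinuousFunction (X := Θ) fh
    simpa [hfh] using this
  -- integrability
  have hint0 : ∀ Q : ProbabilityMeasure Θ, Integrable (g 0) (Q : Measure Θ) := fun Q => by
    simpa [hf0] using f0.integrable (Q : Measure Θ)
  have hinth : ∀ Q : ProbabilityMeasure Θ, Integrable ghat (Q : Measure Θ) := fun Q => by
    simpa [hfh] using fh.integrable (Q : Measure Θ)
  have hintρ : ∀ ρ ∈ Set.Ioo (0:ℝ) 1, ∀ Q : ProbabilityMeasure Θ,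
      Integrable (g ρ) (Q : Measure Θ) := by
    intro ρ hρ Q
    obtain ⟨C, hC⟩ := hgb ρ hρ
    have := (BoundedContinuousFunction.ofNormedAddCommGroup (g ρ) (hg ρ hρ) C
      (fun θ => by simpa [Real.norm_eq_abs] using hC θ)).integrable (Q : Measure Θ)
    simpa using this
  -- bound on φh
  have hφhb : ∀ Q : ProbabilityMeasure Θ, |φh Q| ≤ Ch := by
    intro Q
    have := norm_integral_le_of_norm_le_const (μ := (Q : Measure Θ)) (f := ghat) (C := Ch)
      (Filter.Eventually.of_forall fun θ => by simpa [Real.norm_eq_abs] using hCh θ)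
    simpa [Real.norm_eq_abs] using this
  set M0 := Jval K g 0 with hM0
  have himg0 : IsCompact (φ0 '' K) := hK.image hφ0c
  have hne0 : (φ0 '' K).Nonempty := hKne.image _
  have hbdd0 : BddAbove (φ0 '' K) := himg0.bddAbove
  have hM0mem : M0 ∈ φ0 '' K := by
    have : sSup (φ0 '' K) ∈ φ0 '' K := himg0.sSup_mem hne0
    simpa [hM0, Jval, hφ0def] using this
  have hle0 : ∀ Q ∈ K, φ0 Q ≤ M0 := by
    intro Q hQ
    simpa [hM0, Jval, hφ0def] using le_csSup hbdd0 (Set.mem_image_of_mem φ0 hQ)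
  -- K₀ compact nonempty
  have hK₀c : IsCompact K₀ := by
    rw [hK₀]
    have : {Q ∈ K | (∫ θ, g 0 θ ∂(Q : Measure Θ)) = Jval K g 0}
        = K ∩ {Q | φ0 Q = M0} := by ext Q; simp [hφ0def, hM0]
    rw [this]
    exact hK.inter_right (isClosed_eq hφ0c continuous_const)
  have hK₀ne : K₀.Nonempty := by
    obtain ⟨Q0, hQ0K, hQ0⟩ := hM0mem
    exact ⟨Q0, by rw [hK₀]; exact ⟨hQ0K, by simpa [hφ0def, hM0] using hQ0⟩⟩
  obtain ⟨Qbar, hQbarK₀, hQbarmax⟩ := hK₀c.exists_isMaxOn hK₀ne hφhc.continuousOn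
  have hQbarK : Qbar ∈ K := by rw [hK₀] at hQbarK₀; exact hQbarK₀.1
  have hQbar0 : φ0 Qbar = M0 := by rw [hK₀] at hQbarK₀; exact hQbarK₀.2
  set M := φh Qbar with hM
  refine ⟨Qbar, hQbarK₀, fun Q hQ => isMaxOn_iff.mp hQbarmax Q hQ, ?_⟩
  -- key approximation
  have key : ∀ ε : ℝ, 0 < ε → ∀ᶠ ρ in l, ρ ∈ Set.Ioo (0:ℝ) 1 ∧
      ∀ Q : ProbabilityMeasure Θ,
        |(∫ θ, g ρ θ ∂(Q : Measure Θ)) - (φ0 Q + ρ * φh Q)| ≤ ε * ρ := by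
    intro ε hε
    have h1 := Metric.tendstoUniformly_iff.mp hunif ε hε
    filter_upwards [h1, eventually_mem_nhdsWithin] with ρ hρ1 hρ2
    refine ⟨hρ2, fun Q => ?_⟩
    have hρpos : 0 < ρ := hρ2.1
    have hpt : ∀ θ, ‖g ρ θ - g 0 θ - ρ * ghat θ‖ ≤ ε * ρ := by
      intro θ
      have h := hρ1 θ
      rw [Real.dist_eq] at h
      have hρne : ρ ≠ 0 := hρpos.ne'
      have : g ρ θ - g 0 θ - ρ * ghat θ = -(ρ * (ghat θ - (g ρ θ - g 0 θ) / ρ)) := by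
        field_simp
        ring
      rw [Real.norm_eq_abs, this, abs_neg, abs_mul, abs_of_pos hρpos]
      calc ρ * |ghat θ - (g ρ θ - g 0 θ) / ρ| ≤ ρ * ε := by
            exact mul_le_mul_of_nonneg_left h.le hρpos.le
        _ = ε * ρ := mul_comm _ _
    have hi1 := hintρ ρ hρ2 Q
    have hi2 := hint0 Q
    have hi3 := (hinth Q).const_mul ρ
    have hsplit : (∫ θ, (g ρ θ - g 0 θ - ρ * ghat θ) ∂(Q : Measure Θ))
        = (∫ θ, g ρ θ ∂(Q : Measure Θ)) - (φ0 Q + ρ * φh Q) := by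
      have hiA : Integrable (fun θ => g ρ θ - g 0 θ) (Q : Measure Θ) := hi1.sub hi2
      rw [integral_sub hiA hi3, integral_sub hi1 hi2, integral_const_mul]
      simp only [hφ0def, hφhdef]; ring
    have := norm_integral_le_of_norm_le_const (μ := (Q : Measure Θ))
      (f := fun θ => g ρ θ - g 0 θ - ρ * ghat θ) (C := ε * ρ)
      (Filter.Eventually.of_forall hpt)
    rw [hsplit] at this
    simpa [Real.norm_eq_abs] using this
  -- bddAbove of image for ρ ∈ Ioo
  have hbddρ : ∀ ρ ∈ Set.Ioo (0:ℝ) 1,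
      BddAbove ((fun Q : ProbabilityMeasure Θ => ∫ θ, g ρ θ ∂(Q : Measure Θ)) '' K) := by
    intro ρ hρ
    obtain ⟨C, hC⟩ := hgb ρ hρ
    refine ⟨C, ?_⟩
    rintro x ⟨Q, hQ, rfl⟩
    have := norm_integral_le_of_norm_le_const (μ := (Q : Measure Θ)) (f := g ρ) (C := C)
      (Filter.Eventually.of_forall fun θ => by simpa [Real.norm_eq_abs] using hC θ)
    simp only [measure_univ, ENNReal.toReal_one, probReal_univ, mul_one, Real.norm_eq_abs] at this
    exact (abs_le.mp this).2
  rw [show (∫ θ, ghat θ ∂(Qbar : Measure Θ)) = M from rfl]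
  rw [tendsto_order]
  constructor
  · -- lower bound
    intro a ha
    set ε := (M - a) / 2 with hε
    have hεpos : 0 < ε := by simp [hε]; linarith
    filter_upwards [key ε hεpos] with ρ ⟨hρIoo, hρkey⟩
    have hρpos : 0 < ρ := hρIoo.1
    have h1 := hρkey Qbar
    have h2 : (∫ θ, g ρ θ ∂(Qbar : Measure Θ)) ≤ Jval K g ρ :=
      le_csSup (hbddρ ρ hρIoo) (Set.mem_image_of_mem _ hQbarK)
    have h3 : M0 + ρ * M - ε * ρ ≤ Jval K g ρ := by
      have h1' := (abs_le.mp h1).1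
      rw [hQbar0, ← hM] at h1'
      linarith
    rw [lt_div_iff₀ hρpos]
    have hJ0 : M0 = Jval K g 0 := hM0
    nlinarith [h3, mul_pos hρpos hεpos]
  · -- upper bound
    intro a ha
    set ε := (a - M) / 3 with hε
    have hεpos : 0 < ε := by simp [hε]; linarith
    -- the "bad" compact set
    set V := K ∩ {Q | M + ε ≤ φh Q} with hV
    have hVc : IsCompact V := hK.inter_right (isClosed_le continuous_const hφhc)
    obtain ⟨δ, hδpos, hδ⟩ : ∃ δ : ℝ, 0 < δ ∧ ∀ Q ∈ V, φ0 Q ≤ M0 - δ := by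
      rcases Set.eq_empty_or_nonempty V with hVe | hVne
      · exact ⟨1, one_pos, fun Q hQ => by rw [hVe] at hQ; exact absurd hQ (Set.notMem_empty Q)⟩
      · obtain ⟨Qv, hQvV, hQvmax⟩ := hVc.exists_isMaxOn hVne hφ0c.continuousOn
        have hQvK : Qv ∈ K := hQvV.1
        have hQvnot : Qv ∉ K₀ := by
          intro hmem
          have h1 : φh Qv ≤ M := isMaxOn_iff.mp hQbarmax Qv hmem
          have h2 : M + ε ≤ φh Qv := hQvV.2
          linarith
        have hlt : φ0 Qv < M0 := by
          rcases lt_or_eq_of_le (hle0 Qv hQvK) with h | h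
          · exact h
          · exact absurd (by rw [hK₀]; exact ⟨hQvK, by simpa [hφ0def, hM0] using h⟩) hQvnot
        exact ⟨M0 - φ0 Qv, by linarith, fun Q hQ => by
          have := isMaxOn_iff.mp hQvmax Q hQ; linarith⟩
    have hsmall : ∀ᶠ ρ in l, ρ < δ / (|Ch - M - ε| + 1) := by
      have hpos : 0 < δ / (|Ch - M - ε| + 1) := by positivity
      exact Filter.Eventually.filter_mono nhdsWithin_le_nhds (gt_mem_nhds hpos)
    filter_upwards [key ε hεpos, hsmall] with ρ ⟨hρIoo, hρkey⟩ hρδ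
    have hρpos : 0 < ρ := hρIoo.1
    -- bound all Q ∈ K
    have hall : ∀ Q ∈ K, (∫ θ, g ρ θ ∂(Q : Measure Θ)) ≤ M0 + ρ * (M + 2 * ε) := by
      intro Q hQ
      have h1 := (abs_le.mp (hρkey Q)).2
      by_cases hQV : M + ε ≤ φh Q
      · -- Q ∈ V
        have h2 := hδ Q ⟨hQ, hQV⟩
        have h3 : φh Q ≤ Ch := (abs_le.mp (hφhb Q)).2
        have hb : (0:ℝ) < |Ch - M - ε| + 1 := by positivity
        have h5 : ρ * (|Ch - M - ε| + 1) ≤ δ := by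
          calc ρ * (|Ch - M - ε| + 1)
              ≤ (δ / (|Ch - M - ε| + 1)) * (|Ch - M - ε| + 1) := by nlinarith
            _ = δ := by field_simp
        have h4 : ρ * (Ch - M - ε) ≤ δ := by
          nlinarith [le_abs_self (Ch - M - ε)]
        have h6 : ρ * φh Q ≤ ρ * Ch := mul_le_mul_of_nonneg_left h3 hρpos.le
        nlinarith
      · push_neg at hQV
        have h3 : φ0 Q ≤ M0 := hle0 Q hQ
        have h6 : ρ * φh Q ≤ ρ * (M + ε) := mul_le_mul_of_nonneg_left hQV.le hρpos.le
        nlinarith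
    have hJ : Jval K g ρ ≤ M0 + ρ * (M + 2 * ε) := by
      apply csSup_le (hKne.image _)
      rintro x ⟨Q, hQ, rfl⟩
      exact hall Q hQ
    rw [div_lt_iff₀ hρpos]
    have hMa : M + 3 * ε = a := by rw [hε]; ring
    have hJ0 : M0 = Jval K g 0 := hM0
    nlinarith [mul_pos hρpos hεpos]
end

section
/- Fix integers n, k ≥ 1 and reals T > 0, δ > 0, M > 0. Let Ã, C̃ : [0,T] → ℝ^{2n×2n}, L̃ : [0,T] → Sym_{2n}(ℝ), B, D : [0,T] → ℝ^{2n×k}, S : [0,T] → ℝ^{k×2n}, F : [0,T] → ℝ, R₁, R₂ : [0,T] → Sym_k(ℝ) and m̃₁, m̃₂ : [0,T] → (0,∞) be continuous functions, all bounded in norm by M on [0,T], and let G̃ ∈ ℝ^{2n×2n} with ‖G̃‖ ≤ M. For λ ∈ [0,1] set Λ(λ) = diag(λIₙ, (1−λ)Iₙ) (block diagonal (2n)×(2n)) and R^λ(t) = λ m̃₁(t) R₁(t) + (1−λ) m̃₂(t) R₂(t). Let λ, λ' ∈ [0,1] and suppose P, P' : [0,T] → Sym_{2n}(ℝ) are continuously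 differentiable with ‖P(t)‖ ≤ M and ‖P'(t)‖ ≤ M, such that for every t ∈ [0,T] the matrices R^λ(t) + D(t)ᵀP(t)D(t) and R^{λ'}(t) + D(t)ᵀP'(t)D(t) are invertible with inverses bounded in norm by 1/δ, and P solves the Riccati equation dP/dt + P(Ã + FC̃) + (Ã + FC̃)ᵀP + C̃ᵀPC̃ + L̃Λ(λ) − (P(B + DF) + Λ(λ)Sᵀ + C̃ᵀPD)(R^λ + DᵀPD)⁻¹((B + DF)ᵀP + DᵀPC̃ + SΛ(λ)) = 0 on [0,T] with P(T) = Λ(λ)G̃, while P' solves the same equation with λ replaced by λ' and P'(T) = Λ(λ')G̃. Then there exists a constant C, depending only on n, k, T, δ and M, such that ‖P(t) − P'(t)‖ ≤ C|λ − λ'| for all t ∈ [0,T]. -/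
open Matrix Set

attribute [local instance] Matrix.normedAddCommGroup Matrix.normedSpace

/-- The block diagonal mixing matrix `Λ(λ) = diag(λIₙ, (1−λ)Iₙ)`. -/
noncomputable def LamMat (n : ℕ) (l : ℝ) :
    Matrix (Fin n ⊕ Fin n) (Fin n ⊕ Fin n) ℝ :=
  fromBlocks (l • (1 : Matrix (Fin n) (Fin n) ℝ)) 0 0
    ((1 - l) • (1 : Matrix (Fin n) (Fin n) ℝ))

/-- The mixed weight matrix `R^λ = λm̃₁R₁ + (1−λ)m̃₂R₂`. -/
noncomputable def RlamMat {k : ℕ} (l m₁ m₂ : ℝ) (R₁ R₂ : Matrix (Fin k) (Fin k) ℝ) :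
    Matrix (Fin k) (Fin k) ℝ :=
  (l * m₁) • R₁ + ((1 - l) * m₂) • R₂

/-- The left-hand side of the Riccati equation (4.11) of the paper, at a fixed time,
with all coefficient values and the value `P` and derivative value `dP` plugged in. -/
noncomputable def riccatiLHS (n k : ℕ)
    (Atil Ctil Ltil : Matrix (Fin n ⊕ Fin n) (Fin n ⊕ Fin n) ℝ)
    (B D : Matrix (Fin n ⊕ Fin n) (Fin k) ℝ) (S : Matrix (Fin k) (Fin n ⊕ Fin n) ℝ)
    (F : ℝ) (R₁ R₂ : Matrix (Fin k) (Fin k) ℝ) (m₁ m₂ l : ℝ)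
    (P dP : Matrix (Fin n ⊕ Fin n) (Fin n ⊕ Fin n) ℝ) :
    Matrix (Fin n ⊕ Fin n) (Fin n ⊕ Fin n) ℝ :=
  dP + P * (Atil + F • Ctil) + (Atil + F • Ctil)ᵀ * P + Ctilᵀ * P * Ctil
    + Ltil * LamMat n l
    - (P * (B + F • D) + LamMat n l * Sᵀ + Ctilᵀ * P * D)
        * (RlamMat l m₁ m₂ R₁ R₂ + Dᵀ * P * D)⁻¹
        * ((B + F • D)ᵀ * P + Dᵀ * P * Ctil + S * LamMat n l)

section helpers

variable {α β γ : Type*} [Fintype α] [Fintype β] [Fintype γ]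

lemma mul_norm_le (A : Matrix α β ℝ) (B : Matrix β γ ℝ) :
    ‖A * B‖ ≤ (Fintype.card β : ℝ) * ‖A‖ * ‖B‖ := by
  rw [Matrix.norm_le_iff (by positivity)]
  intro i j
  calc ‖(A * B) i j‖ ≤ ∑ x, ‖A i x * B x j‖ := by
        rw [Matrix.mul_apply]; exact norm_sum_le _ _
    _ ≤ ∑ _x : β, ‖A‖ * ‖B‖ := Finset.sum_le_sum fun x _ => by
        rw [norm_mul]
        exact mul_le_mul (A.norm_entry_le_entrywise_sup_norm)
          (B.norm_entry_le_entrywise_sup_norm) (norm_nonneg _) (norm_nonneg _)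
    _ = (Fintype.card β : ℝ) * ‖A‖ * ‖B‖ := by
        rw [Finset.sum_const, Finset.card_univ, nsmul_eq_mul, mul_assoc]

lemma mul_bound {μ x y : ℝ} (hμ : (Fintype.card β : ℝ) ≤ μ)
    (A : Matrix α β ℝ) (B : Matrix β γ ℝ) (hx : ‖A‖ ≤ x) (hy : ‖B‖ ≤ y) :
    ‖A * B‖ ≤ μ * x * y := by
  have h0x : (0:ℝ) ≤ x := le_trans (norm_nonneg _) hx
  have h0y : (0:ℝ) ≤ y := le_trans (norm_nonneg _) hy
  have := mul_norm_le A B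
  have h2 : (Fintype.card β : ℝ) * ‖A‖ * ‖B‖ ≤ μ * x * y := by
    have hc : (0:ℝ) ≤ (Fintype.card β : ℝ) := by positivity
    exact mul_le_mul (mul_le_mul hμ hx (norm_nonneg _) (le_trans hc hμ)) hy
      (norm_nonneg _) (mul_nonneg (le_trans hc hμ) h0x)
  linarith

lemma norm_LamMat_le (n : ℕ) {l : ℝ} (hl : l ∈ Icc (0:ℝ) 1) :
    ‖LamMat n l‖ ≤ 1 := by
  rw [Matrix.norm_le_iff zero_le_one]
  rintro (i | i) (j | j) <;>
    simp only [LamMat, fromBlocks_apply₁₁, fromBlocks_apply₁₂, fromBlocks_apply₂₁,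
      fromBlocks_apply₂₂, Matrix.smul_apply, Matrix.one_apply, Matrix.zero_apply,
      smul_eq_mul, mul_ite, mul_one, mul_zero] <;>
    [skip; simp; simp; skip] <;> split <;>
    simp only [norm_zero, Real.norm_eq_abs] <;>
    first
      | exact zero_le_one
      | (rw [abs_le]; constructor <;> [linarith [hl.1, hl.2]; linarith [hl.1, hl.2]])

lemma norm_LamMat_sub (n : ℕ) (l l' : ℝ) :
    ‖LamMat n l - LamMat n l'‖ ≤ |l - l'| := by
  rw [Matrix.norm_le_iff (abs_nonneg _)]
  rintro (i | i) (j | j) <;>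
    simp only [LamMat, Matrix.sub_apply, fromBlocks_apply₁₁, fromBlocks_apply₁₂,
      fromBlocks_apply₂₁, fromBlocks_apply₂₂, Matrix.smul_apply, Matrix.one_apply,
      Matrix.zero_apply, smul_eq_mul, mul_ite, mul_one, mul_zero] <;>
    [skip; simp; simp; skip] <;> split <;>
    simp only [Real.norm_eq_abs, sub_zero, sub_self, abs_zero] <;>
    first
      | exact le_rfl
      | positivity
      | (rw [show (1 - l) - (1 - l') = -(l - l') by ring, abs_neg])


lemma inv_sub_inv'' {m : Type*} [Fintype m] [DecidableEq m]
    {V₁ V₂ : Matrix m m ℝ} (h₁ : IsUnit V₁) (h₂ : IsUnit V₂) :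
    V₁⁻¹ - V₂⁻¹ = V₁⁻¹ * (V₂ - V₁) * V₂⁻¹ := by
  have d₁ := (Matrix.isUnit_iff_isUnit_det _).mp h₁
  have d₂ := (Matrix.isUnit_iff_isUnit_det _).mp h₂
  have : V₁⁻¹ * (V₂ - V₁) * V₂⁻¹
      = V₁⁻¹ * (V₂ * V₂⁻¹) - (V₁⁻¹ * V₁) * V₂⁻¹ := by
    simp only [Matrix.mul_sub, Matrix.sub_mul, Matrix.mul_assoc]
  rw [this, Matrix.mul_nonsing_inv _ d₂, Matrix.nonsing_inv_mul _ d₁, mul_one, one_mul]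

end helpers
noncomputable def Kc (μ M ι : ℝ) : ℝ :=
  μ * (M + M*M) + μ * (M + M*M) + μ*(μ*M)*M + μ*M
  + (μ*(μ*(μ*(M + M*M) + μ*M + μ*(μ*M)*M)*ι)*(μ*(M + M*M)*M + μ*(μ*M*M)*M + μ*M*1)
     + μ*(μ*(μ*M*(M + M*M) + μ*1*M + μ*(μ*M*M)*M)*(μ*(μ*ι*((M*M + M*M) + μ*(μ*M)*M))*ι))
        *(μ*(M + M*M)*M + μ*(μ*M*M)*M + μ*M*1)
     + μ*(μ*(μ*M*(M + M*M) + μ*1*M + μ*(μ*M*M)*M)*ι)*(μ*(M + M*M) + μ*(μ*M)*M + μ*M))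

lemma norm_add4_sub {E : Type*} [SeminormedAddCommGroup E] (x1 x2 x3 x4 x5 : E) :
    ‖x1 + x2 + x3 + x4 - x5‖ ≤ ‖x1‖ + ‖x2‖ + ‖x3‖ + ‖x4‖ + ‖x5‖ := by
  calc ‖x1 + x2 + x3 + x4 - x5‖ ≤ ‖x1 + x2 + x3 + x4‖ + ‖x5‖ := norm_sub_le _ _
    _ ≤ (‖x1 + x2 + x3‖ + ‖x4‖) + ‖x5‖ := by gcongr; exact norm_add_le _ _
    _ ≤ ((‖x1 + x2‖ + ‖x3‖) + ‖x4‖) + ‖x5‖ := by gcongr; exact norm_add_le _ _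
    _ ≤ (((‖x1‖ + ‖x2‖) + ‖x3‖) + ‖x4‖) + ‖x5‖ := by gcongr; exact norm_add_le _ _

set_option maxHeartbeats 2000000 in
lemma key_lipschitz (n k : ℕ) (M δ : ℝ) (hδ : 0 < δ)
    (Atil Ctil Ltil P P' : Matrix (Fin n ⊕ Fin n) (Fin n ⊕ Fin n) ℝ)
    (B D : Matrix (Fin n ⊕ Fin n) (Fin k) ℝ) (S : Matrix (Fin k) (Fin n ⊕ Fin n) ℝ)
    (F m₁ m₂ l l' : ℝ) (R₁ R₂ : Matrix (Fin k) (Fin k) ℝ)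
    (hA : ‖Atil‖ ≤ M) (hC : ‖Ctil‖ ≤ M) (hL : ‖Ltil‖ ≤ M) (hB : ‖B‖ ≤ M) (hD : ‖D‖ ≤ M)
    (hS : ‖S‖ ≤ M) (hF : |F| ≤ M) (hR₁ : ‖R₁‖ ≤ M) (hR₂ : ‖R₂‖ ≤ M)
    (hm₁ : |m₁| ≤ M) (hm₂ : |m₂| ≤ M)
    (hl : l ∈ Icc (0:ℝ) 1) (hl' : l' ∈ Icc (0:ℝ) 1)
    (hP : ‖P‖ ≤ M) (hP' : ‖P'‖ ≤ M)
    (hV : IsUnit (RlamMat l m₁ m₂ R₁ R₂ + Dᵀ * P * D))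
    (hVi : ‖(RlamMat l m₁ m₂ R₁ R₂ + Dᵀ * P * D)⁻¹‖ ≤ 1/δ)
    (hV' : IsUnit (RlamMat l' m₁ m₂ R₁ R₂ + Dᵀ * P' * D))
    (hVi' : ‖(RlamMat l' m₁ m₂ R₁ R₂ + Dᵀ * P' * D)⁻¹‖ ≤ 1/δ) :
    ‖riccatiLHS n k Atil Ctil Ltil B D S F R₁ R₂ m₁ m₂ l P 0
      - riccatiLHS n k Atil Ctil Ltil B D S F R₁ R₂ m₁ m₂ l' P' 0‖
      ≤ Kc (2*(n:ℝ)+k) M (1/δ) * (‖P - P'‖ + |l - l'|) := by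
  have hM0 : (0:ℝ) ≤ M := le_trans (norm_nonneg _) hA
  have hι0 : (0:ℝ) ≤ 1/δ := by positivity
  have hcard2 : ((Fintype.card (Fin n ⊕ Fin n) : ℕ) : ℝ) ≤ 2*(n:ℝ)+k := by
    simp [Fintype.card_sum]; push_cast; linarith [Nat.cast_nonneg (α := ℝ) k]
  have hcardk : ((Fintype.card (Fin k) : ℕ) : ℝ) ≤ 2*(n:ℝ)+k := by
    have : (0:ℝ) ≤ (n:ℝ) := Nat.cast_nonneg n
    simp only [Fintype.card_fin]
    linarith
  simp only [riccatiLHS]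
  set μ : ℝ := 2*(n:ℝ)+k with hμdef
  set s : ℝ := ‖P - P'‖ + |l - l'| with hsdef
  set ι : ℝ := 1/δ with hιdef
  set aM : ℝ := M + M*M with haMdef
  have hs0 : (0:ℝ) ≤ s := by positivity
  have heN : ‖P - P'‖ ≤ s := le_add_of_nonneg_right (abs_nonneg _)
  have heN' : ‖P' - P‖ ≤ s := by rw [norm_sub_rev]; exact heN
  have hdL : |l - l'| ≤ s := le_add_of_nonneg_left (norm_nonneg _)
  set A₀ := Atil + F • Ctil with hA₀def
  set B₀ := B + F • D with hB₀def
  set Λ₁ := LamMat n l with hΛ₁def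
  set Λ₂ := LamMat n l' with hΛ₂def
  set V₁ := RlamMat l m₁ m₂ R₁ R₂ + Dᵀ * P * D with hV₁def
  set V₂ := RlamMat l' m₁ m₂ R₁ R₂ + Dᵀ * P' * D with hV₂def
  set U₁ := P * B₀ + Λ₁ * Sᵀ + Ctilᵀ * P * D with hU₁def
  set U₂ := P' * B₀ + Λ₂ * Sᵀ + Ctilᵀ * P' * D with hU₂def
  set W₁ := B₀ᵀ * P + Dᵀ * P * Ctil + S * Λ₁ with hW₁def
  set W₂ := B₀ᵀ * P' + Dᵀ * P' * Ctil + S * Λ₂ with hW₂def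
  have hCt : ‖Ctilᵀ‖ ≤ M := by rw [Matrix.norm_transpose]; exact hC
  have hSt : ‖Sᵀ‖ ≤ M := by rw [Matrix.norm_transpose]; exact hS
  have hDt : ‖Dᵀ‖ ≤ M := by rw [Matrix.norm_transpose]; exact hD
  have ha : ‖A₀‖ ≤ aM := by
    have h1 : ‖F • Ctil‖ ≤ M*M := by
      rw [norm_smul, Real.norm_eq_abs]
      exact mul_le_mul hF hC (norm_nonneg _) hM0
    calc ‖A₀‖ ≤ ‖Atil‖ + ‖F • Ctil‖ := norm_add_le _ _
      _ ≤ aM := by rw [haMdef]; linarith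
  have hat : ‖A₀ᵀ‖ ≤ aM := by rw [Matrix.norm_transpose]; exact ha
  have hb : ‖B₀‖ ≤ aM := by
    have h1 : ‖F • D‖ ≤ M*M := by
      rw [norm_smul, Real.norm_eq_abs]
      exact mul_le_mul hF hD (norm_nonneg _) hM0
    calc ‖B₀‖ ≤ ‖B‖ + ‖F • D‖ := norm_add_le _ _
      _ ≤ aM := by rw [haMdef]; linarith
  have hbt : ‖B₀ᵀ‖ ≤ aM := by rw [Matrix.norm_transpose]; exact hb
  have hΛ₁n : ‖Λ₁‖ ≤ 1 := norm_LamMat_le n hl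
  have hΛ₂n : ‖Λ₂‖ ≤ 1 := norm_LamMat_le n hl'
  have hdΛ : ‖Λ₁ - Λ₂‖ ≤ s := (norm_LamMat_sub n l l').trans hdL
  -- bounds on U₂, W₁, W₂
  have hU₂n : ‖U₂‖ ≤ μ*M*aM + μ*1*M + μ*(μ*M*M)*M := by
    have h1 : ‖P' * B₀‖ ≤ μ*M*aM := mul_bound hcard2 _ _ hP' hb
    have h2 : ‖Λ₂ * Sᵀ‖ ≤ μ*1*M := mul_bound hcard2 _ _ hΛ₂n hSt
    have h3 : ‖Ctilᵀ * P' * D‖ ≤ μ*(μ*M*M)*M :=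
      mul_bound hcard2 _ _ (mul_bound hcard2 _ _ hCt hP') hD
    calc ‖U₂‖ ≤ ‖P' * B₀‖ + ‖Λ₂ * Sᵀ‖ + ‖Ctilᵀ * P' * D‖ := norm_add₃_le
      _ ≤ _ := by linarith
  have hW₁n : ‖W₁‖ ≤ μ*aM*M + μ*(μ*M*M)*M + μ*M*1 := by
    have h1 : ‖B₀ᵀ * P‖ ≤ μ*aM*M := mul_bound hcard2 _ _ hbt hP
    have h2 : ‖Dᵀ * P * Ctil‖ ≤ μ*(μ*M*M)*M :=
      mul_bound hcard2 _ _ (mul_bound hcard2 _ _ hDt hP) hC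
    have h3 : ‖S * Λ₁‖ ≤ μ*M*1 := mul_bound hcard2 _ _ hS hΛ₁n
    calc ‖W₁‖ ≤ ‖B₀ᵀ * P‖ + ‖Dᵀ * P * Ctil‖ + ‖S * Λ₁‖ := norm_add₃_le
      _ ≤ _ := by linarith
  -- difference bounds
  have hdU : ‖U₁ - U₂‖ ≤ μ*s*aM + μ*s*M + μ*(μ*M*s)*M := by
    have hrw : U₁ - U₂ = (P - P')*B₀ + (Λ₁ - Λ₂)*Sᵀ + Ctilᵀ*(P - P')*D := by
      rw [hU₁def, hU₂def]
      simp only [Matrix.sub_mul, Matrix.mul_sub]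
      abel
    rw [hrw]
    have h1 : ‖(P - P')*B₀‖ ≤ μ*s*aM := mul_bound hcard2 _ _ heN hb
    have h2 : ‖(Λ₁ - Λ₂)*Sᵀ‖ ≤ μ*s*M := mul_bound hcard2 _ _ hdΛ hSt
    have h3 : ‖Ctilᵀ*(P - P')*D‖ ≤ μ*(μ*M*s)*M :=
      mul_bound hcard2 _ _ (mul_bound hcard2 _ _ hCt heN) hD
    calc ‖_ + _ + _‖ ≤ ‖(P - P')*B₀‖ + ‖(Λ₁ - Λ₂)*Sᵀ‖ + ‖Ctilᵀ*(P - P')*D‖ := norm_add₃_le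
      _ ≤ _ := by linarith
  have hdW : ‖W₁ - W₂‖ ≤ μ*aM*s + μ*(μ*M*s)*M + μ*M*s := by
    have hrw : W₁ - W₂ = B₀ᵀ*(P - P') + Dᵀ*(P - P')*Ctil + S*(Λ₁ - Λ₂) := by
      rw [hW₁def, hW₂def]
      simp only [Matrix.sub_mul, Matrix.mul_sub]
      abel
    rw [hrw]
    have h1 : ‖B₀ᵀ*(P - P')‖ ≤ μ*aM*s := mul_bound hcard2 _ _ hbt heN
    have h2 : ‖Dᵀ*(P - P')*Ctil‖ ≤ μ*(μ*M*s)*M :=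
      mul_bound hcard2 _ _ (mul_bound hcard2 _ _ hDt heN) hC
    have h3 : ‖S*(Λ₁ - Λ₂)‖ ≤ μ*M*s := mul_bound hcard2 _ _ hS hdΛ
    calc ‖_ + _ + _‖ ≤ ‖B₀ᵀ*(P - P')‖ + ‖Dᵀ*(P - P')*Ctil‖ + ‖S*(Λ₁ - Λ₂)‖ := norm_add₃_le
      _ ≤ _ := by linarith
  have hdV : ‖V₂ - V₁‖ ≤ (s*M*M + s*M*M) + μ*(μ*M*s)*M := by
    have hrw : V₂ - V₁ = (RlamMat l' m₁ m₂ R₁ R₂ - RlamMat l m₁ m₂ R₁ R₂)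
        + Dᵀ*(P' - P)*D := by
      rw [hV₁def, hV₂def]
      simp only [Matrix.sub_mul, Matrix.mul_sub]
      abel
    rw [hrw]
    have hR : RlamMat l' m₁ m₂ R₁ R₂ - RlamMat l m₁ m₂ R₁ R₂
        = ((l' - l) * m₁) • R₁ + ((l - l') * m₂) • R₂ := by
      simp only [RlamMat]
      module
    have h1 : ‖RlamMat l' m₁ m₂ R₁ R₂ - RlamMat l m₁ m₂ R₁ R₂‖ ≤ s*M*M + s*M*M := by
      rw [hR]
      have e1 : ‖((l' - l) * m₁) • R₁‖ ≤ s*M*M := by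
        rw [norm_smul, Real.norm_eq_abs, abs_mul]
        have : |l' - l| ≤ s := by rw [abs_sub_comm]; exact hdL
        have := mul_le_mul (mul_le_mul this hm₁ (abs_nonneg _) hs0) hR₁ (norm_nonneg _)
          (by positivity)
        linarith
      have e2 : ‖((l - l') * m₂) • R₂‖ ≤ s*M*M := by
        rw [norm_smul, Real.norm_eq_abs, abs_mul]
        have := mul_le_mul (mul_le_mul hdL hm₂ (abs_nonneg _) hs0) hR₂ (norm_nonneg _)
          (by positivity)
        linarith
      calc ‖_ + _‖ ≤ ‖((l' - l) * m₁) • R₁‖ + ‖((l - l') * m₂) • R₂‖ := norm_add_le _ _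
        _ ≤ _ := by linarith
    have h2 : ‖Dᵀ*(P' - P)*D‖ ≤ μ*(μ*M*s)*M :=
      mul_bound hcard2 _ _ (mul_bound hcard2 _ _ hDt heN') hD
    calc ‖_ + _‖ ≤ ‖RlamMat l' m₁ m₂ R₁ R₂ - RlamMat l m₁ m₂ R₁ R₂‖ + ‖Dᵀ*(P' - P)*D‖ :=
          norm_add_le _ _
      _ ≤ _ := by linarith
  have hdX : ‖V₁⁻¹ - V₂⁻¹‖ ≤ μ*(μ*ι*((s*M*M + s*M*M) + μ*(μ*M*s)*M))*ι := by
    rw [inv_sub_inv'' hV hV']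
    exact mul_bound hcardk _ _ (mul_bound hcardk _ _ hVi hdV) hVi'
  -- the quadratic-term difference
  have hdT : ‖U₁*V₁⁻¹*W₁ - U₂*V₂⁻¹*W₂‖ ≤
      μ*(μ*(μ*s*aM + μ*s*M + μ*(μ*M*s)*M)*ι)*(μ*aM*M + μ*(μ*M*M)*M + μ*M*1)
      + μ*((μ*M*aM + μ*1*M + μ*(μ*M*M)*M)*(μ*(μ*ι*((s*M*M + s*M*M) + μ*(μ*M*s)*M))*ι)*μ)
          *(μ*aM*M + μ*(μ*M*M)*M + μ*M*1)
      + μ*(μ*(μ*M*aM + μ*1*M + μ*(μ*M*M)*M)*ι)*(μ*aM*s + μ*(μ*M*s)*M + μ*M*s) := by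
    have hrw : U₁*V₁⁻¹*W₁ - U₂*V₂⁻¹*W₂
        = (U₁ - U₂)*V₁⁻¹*W₁ + U₂*(V₁⁻¹ - V₂⁻¹)*W₁ + U₂*V₂⁻¹*(W₁ - W₂) := by
      simp only [Matrix.sub_mul, Matrix.mul_sub]
      abel
    rw [hrw]
    have h1 : ‖(U₁ - U₂)*V₁⁻¹*W₁‖ ≤
        μ*(μ*(μ*s*aM + μ*s*M + μ*(μ*M*s)*M)*ι)*(μ*aM*M + μ*(μ*M*M)*M + μ*M*1) :=
      mul_bound hcardk _ _ (mul_bound hcardk _ _ hdU hVi) hW₁n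
    have h2 : ‖U₂*(V₁⁻¹ - V₂⁻¹)*W₁‖ ≤
        μ*((μ*M*aM + μ*1*M + μ*(μ*M*M)*M)*(μ*(μ*ι*((s*M*M + s*M*M) + μ*(μ*M*s)*M))*ι)*μ)
          *(μ*aM*M + μ*(μ*M*M)*M + μ*M*1) := by
      have := mul_bound hcardk _ _ (mul_bound hcardk _ _ hU₂n hdX) hW₁n
      calc ‖U₂*(V₁⁻¹ - V₂⁻¹)*W₁‖ ≤ _ := this
        _ = _ := by ring
    have h3 : ‖U₂*V₂⁻¹*(W₁ - W₂)‖ ≤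
        μ*(μ*(μ*M*aM + μ*1*M + μ*(μ*M*M)*M)*ι)*(μ*aM*s + μ*(μ*M*s)*M + μ*M*s) :=
      mul_bound hcardk _ _ (mul_bound hcardk _ _ hU₂n hVi') hdW
    calc ‖_ + _ + _‖ ≤ ‖(U₁ - U₂)*V₁⁻¹*W₁‖ + ‖U₂*(V₁⁻¹ - V₂⁻¹)*W₁‖ + ‖U₂*V₂⁻¹*(W₁ - W₂)‖ :=
          norm_add₃_le
      _ ≤ _ := by linarith
  -- reorganize the main difference
  have hre : (0 + P * A₀ + A₀ᵀ * P + Ctilᵀ * P * Ctil + Ltil * Λ₁ - U₁ * V₁⁻¹ * W₁)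
      - (0 + P' * A₀ + A₀ᵀ * P' + Ctilᵀ * P' * Ctil + Ltil * Λ₂ - U₂ * V₂⁻¹ * W₂)
      = (P - P')*A₀ + A₀ᵀ*(P - P') + Ctilᵀ*(P - P')*Ctil + Ltil*(Λ₁ - Λ₂)
        - (U₁*V₁⁻¹*W₁ - U₂*V₂⁻¹*W₂) := by
    simp only [Matrix.sub_mul, Matrix.mul_sub]
    abel
  rw [hre]
  have h1 : ‖(P - P')*A₀‖ ≤ μ*s*aM := mul_bound hcard2 _ _ heN ha
  have h2 : ‖A₀ᵀ*(P - P')‖ ≤ μ*aM*s := mul_bound hcard2 _ _ hat heN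
  have h3 : ‖Ctilᵀ*(P - P')*Ctil‖ ≤ μ*(μ*M*s)*M :=
    mul_bound hcard2 _ _ (mul_bound hcard2 _ _ hCt heN) hC
  have h4 : ‖Ltil*(Λ₁ - Λ₂)‖ ≤ μ*M*s := mul_bound hcard2 _ _ hL hdΛ
  calc ‖_‖ ≤ ‖(P - P')*A₀‖ + ‖A₀ᵀ*(P - P')‖ + ‖Ctilᵀ*(P - P')*Ctil‖ + ‖Ltil*(Λ₁ - Λ₂)‖
        + ‖U₁*V₁⁻¹*W₁ - U₂*V₂⁻¹*W₂‖ := norm_add4_sub _ _ _ _ _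
    _ ≤ μ*s*aM + μ*aM*s + μ*(μ*M*s)*M + μ*M*s
        + (μ*(μ*(μ*s*aM + μ*s*M + μ*(μ*M*s)*M)*ι)*(μ*aM*M + μ*(μ*M*M)*M + μ*M*1)
          + μ*((μ*M*aM + μ*1*M + μ*(μ*M*M)*M)*(μ*(μ*ι*((s*M*M + s*M*M) + μ*(μ*M*s)*M))*ι)*μ)
              *(μ*aM*M + μ*(μ*M*M)*M + μ*M*1)
          + μ*(μ*(μ*M*aM + μ*1*M + μ*(μ*M*M)*M)*ι)*(μ*aM*s + μ*(μ*M*s)*M + μ*M*s)) := by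
        gcongr <;> first | exact h1 | exact h2 | exact h3 | exact h4 | exact hdT
    _ = Kc μ M ι * s := by rw [haMdef]; simp only [Kc]; ring
set_option maxHeartbeats 4000000 in
/-- Inequality (4.13) of the paper: Lipschitz dependence of the solution of the Riccati
equation of the linear quadratic robust control problem on the mixing parameter `λ`,
with a constant depending only on `n`, `k`, `T`, `δ` and `M`. -/
theorem stmt_9 (n k : ℕ) (hn : 1 ≤ n) (hk : 1 ≤ k) (T δ M : ℝ)
    (hT : 0 < T) (hδ : 0 < δ) (hM : 0 < M) :
    ∃ C : ℝ, 0 < C ∧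
      ∀ (Atil Ctil Ltil : ℝ → Matrix (Fin n ⊕ Fin n) (Fin n ⊕ Fin n) ℝ)
        (B D : ℝ → Matrix (Fin n ⊕ Fin n) (Fin k) ℝ)
        (S : ℝ → Matrix (Fin k) (Fin n ⊕ Fin n) ℝ)
        (F : ℝ → ℝ) (R₁ R₂ : ℝ → Matrix (Fin k) (Fin k) ℝ)
        (m₁ m₂ : ℝ → ℝ) (G : Matrix (Fin n ⊕ Fin n) (Fin n ⊕ Fin n) ℝ)
        (lam lam' : ℝ)
        (P P' dP dP' : ℝ → Matrix (Fin n ⊕ Fin n) (Fin n ⊕ Fin n) ℝ),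
        -- continuity of the coefficients on [0, T]
        ContinuousOn Atil (Icc 0 T) → ContinuousOn Ctil (Icc 0 T) →
        ContinuousOn Ltil (Icc 0 T) → ContinuousOn B (Icc 0 T) →
        ContinuousOn D (Icc 0 T) → ContinuousOn S (Icc 0 T) →
        ContinuousOn F (Icc 0 T) → ContinuousOn R₁ (Icc 0 T) →
        ContinuousOn R₂ (Icc 0 T) → ContinuousOn m₁ (Icc 0 T) →
        ContinuousOn m₂ (Icc 0 T) →
        -- symmetry assumptions
        (∀ t ∈ Icc (0 : ℝ) T, (Ltil t).IsSymm) →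
        (∀ t ∈ Icc (0 : ℝ) T, (R₁ t).IsSymm) →
        (∀ t ∈ Icc (0 : ℝ) T, (R₂ t).IsSymm) →
        -- positivity of the weights m̃₁, m̃₂
        (∀ t ∈ Icc (0 : ℝ) T, 0 < m₁ t) →
        (∀ t ∈ Icc (0 : ℝ) T, 0 < m₂ t) →
        -- uniform bound M on all coefficients
        (∀ t ∈ Icc (0 : ℝ) T,
          ‖Atil t‖ ≤ M ∧ ‖Ctil t‖ ≤ M ∧ ‖Ltil t‖ ≤ M ∧ ‖B t‖ ≤ M ∧ ‖D t‖ ≤ M ∧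
          ‖S t‖ ≤ M ∧ |F t| ≤ M ∧ ‖R₁ t‖ ≤ M ∧ ‖R₂ t‖ ≤ M ∧ |m₁ t| ≤ M ∧ |m₂ t| ≤ M) →
        ‖G‖ ≤ M →
        lam ∈ Icc (0 : ℝ) 1 → lam' ∈ Icc (0 : ℝ) 1 →
        -- P, P' are continuously differentiable on [0, T], symmetric, bounded by M
        (∀ t ∈ Icc (0 : ℝ) T, HasDerivWithinAt P (dP t) (Icc 0 T) t) →
        ContinuousOn dP (Icc 0 T) →
        (∀ t ∈ Icc (0 : ℝ) T, HasDerivWithinAt P' (dP' t) (Icc 0 T) t) →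
        ContinuousOn dP' (Icc 0 T) →
        (∀ t ∈ Icc (0 : ℝ) T, (P t).IsSymm ∧ ‖P t‖ ≤ M) →
        (∀ t ∈ Icc (0 : ℝ) T, (P' t).IsSymm ∧ ‖P' t‖ ≤ M) →
        -- invertibility of R^λ + DᵀPD with inverse bounded by 1/δ
        (∀ t ∈ Icc (0 : ℝ) T,
          IsUnit (RlamMat lam (m₁ t) (m₂ t) (R₁ t) (R₂ t) + (D t)ᵀ * P t * D t) ∧
          ‖(RlamMat lam (m₁ t) (m₂ t) (R₁ t) (R₂ t) + (D t)ᵀ * P t * D t)⁻¹‖ ≤ 1 / δ) →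
        (∀ t ∈ Icc (0 : ℝ) T,
          IsUnit (RlamMat lam' (m₁ t) (m₂ t) (R₁ t) (R₂ t) + (D t)ᵀ * P' t * D t) ∧
          ‖(RlamMat lam' (m₁ t) (m₂ t) (R₁ t) (R₂ t) + (D t)ᵀ * P' t * D t)⁻¹‖ ≤ 1 / δ) →
        -- the Riccati equations
        (∀ t ∈ Icc (0 : ℝ) T,
          riccatiLHS n k (Atil t) (Ctil t) (Ltil t) (B t) (D t) (S t) (F t)
            (R₁ t) (R₂ t) (m₁ t) (m₂ t) lam (P t) (dP t) = 0) →
        (∀ t ∈ Icc (0 : ℝ) T,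
          riccatiLHS n k (Atil t) (Ctil t) (Ltil t) (B t) (D t) (S t) (F t)
            (R₁ t) (R₂ t) (m₁ t) (m₂ t) lam' (P' t) (dP' t) = 0) →
        -- terminal conditions
        P T = LamMat n lam * G → P' T = LamMat n lam' * G →
        -- conclusion: Lipschitz dependence on the mixing parameter
        ∀ t ∈ Icc (0 : ℝ) T, ‖P t - P' t‖ ≤ C * |lam - lam'| := by
  set μ : ℝ := 2*(n:ℝ)+k with hμdef
  have hμ0 : (0:ℝ) ≤ μ := by positivity
  set K : ℝ := Kc μ M (1/δ) + 1 with hKdef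
  have hK0 : (0:ℝ) ≤ Kc μ M (1/δ) := by
    have h1 : (0:ℝ) ≤ 1/δ := by positivity
    have h2 : (0:ℝ) ≤ M := hM.le
    simp only [Kc]
    positivity
  have hK1 : (1:ℝ) ≤ K := by rw [hKdef]; linarith
  have hKpos : (0:ℝ) < K := lt_of_lt_of_le one_pos hK1
  refine ⟨(μ*M + 1) * Real.exp (K*T), by positivity, ?_⟩
  intro Atil Ctil Ltil B D S F R₁ R₂ m₁ m₂ G lam lam' P P' dP dP'
    _ _ _ _ _ _ _ _ _ _ _ _ _ _ _ _ hbd hG hlam hlam' hPd hdPc hP'd hdP'c hPs hP's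
    hVP hVP' heq heq' hPT hP'T
  have hcard2 : ((Fintype.card (Fin n ⊕ Fin n) : ℕ) : ℝ) ≤ μ := by
    rw [hμdef]; simp [Fintype.card_sum]
    push_cast; linarith [Nat.cast_nonneg (α := ℝ) k]
  set d : ℝ := |lam - lam'| with hddef
  have hd0 : (0:ℝ) ≤ d := abs_nonneg _
  set g : ℝ → Matrix (Fin n ⊕ Fin n) (Fin n ⊕ Fin n) ℝ :=
    fun x => P (T - x) - P' (T - x) with hgdef
  have hmaps : MapsTo (fun x : ℝ => T - x) (Icc 0 T) (Icc 0 T) := by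
    intro x hx
    rw [mem_Icc] at hx ⊢
    dsimp only
    constructor <;> linarith [hx.1, hx.2]
  -- continuity of g on [0, T]
  have hPc : ContinuousOn P (Icc 0 T) := fun t ht => (hPd t ht).continuousWithinAt
  have hP'c : ContinuousOn P' (Icc 0 T) := fun t ht => (hP'd t ht).continuousWithinAt
  have hgc : ContinuousOn g (Icc 0 T) := by
    have h1 : ContinuousOn (fun x : ℝ => T - x) (Icc 0 T) :=
      (continuous_const.sub continuous_id).continuousOn
    exact ((hPc.sub hP'c).comp h1 hmaps)
  -- derivative of g
  have hgd : ∀ x ∈ Ico (0:ℝ) T,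
      HasDerivWithinAt g ((-1 : ℝ) • (dP (T - x) - dP' (T - x))) (Ici x) x := by
    intro x hx
    have hx' : T - x ∈ Icc (0:ℝ) T := ⟨by linarith [hx.2], by linarith [hx.1]⟩
    have h₁ : HasDerivWithinAt (fun t => P t - P' t) (dP (T-x) - dP' (T-x))
        (Icc 0 T) (T - x) := (hPd _ hx').sub (hP'd _ hx')
    have h₂ : HasDerivWithinAt (fun x : ℝ => T - x) (-1 : ℝ) (Icc 0 T) x := by
      simpa using (hasDerivWithinAt_id x (Icc 0 T)).const_sub T
    have h₃ := h₁.scomp x h₂ hmaps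
    have h₄ : HasDerivWithinAt g ((-1 : ℝ) • (dP (T-x) - dP' (T-x))) (Icc 0 T) x := by
      simp [hgdef, Function.comp_def] at h₃ ⊢; exact h₃
    exact h₄.mono_of_mem_nhdsWithin (Icc_mem_nhdsGE_of_mem hx)
  -- bound on ‖g 0‖
  have hg0 : ‖g 0‖ ≤ μ*d*M := by
    have : g 0 = (LamMat n lam - LamMat n lam') * G := by
      simp only [hgdef, sub_zero, hPT, hP'T, Matrix.sub_mul]
    rw [this]
    exact mul_bound hcard2 _ _ ((norm_LamMat_sub n lam lam').trans le_rfl) hG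
  -- bound on the derivative
  have hbound : ∀ x ∈ Ico (0:ℝ) T,
      ‖(-1 : ℝ) • (dP (T - x) - dP' (T - x))‖ ≤ K * ‖g x‖ + K * d := by
    intro x hx
    have hx' : T - x ∈ Icc (0:ℝ) T := ⟨by linarith [hx.2], by linarith [hx.1]⟩
    set t := T - x with htdef
    obtain ⟨hA, hC, hL, hB, hD, hS, hF, hR₁, hR₂, hm₁, hm₂⟩ := hbd t hx'
    have hdPval : dP t = -(riccatiLHS n k (Atil t) (Ctil t) (Ltil t) (B t) (D t) (S t)
        (F t) (R₁ t) (R₂ t) (m₁ t) (m₂ t) lam (P t) 0) := by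
      have h0 := heq t hx'
      have hsplit : riccatiLHS n k (Atil t) (Ctil t) (Ltil t) (B t) (D t) (S t)
          (F t) (R₁ t) (R₂ t) (m₁ t) (m₂ t) lam (P t) (dP t)
          = dP t + riccatiLHS n k (Atil t) (Ctil t) (Ltil t) (B t) (D t) (S t)
            (F t) (R₁ t) (R₂ t) (m₁ t) (m₂ t) lam (P t) 0 := by
        simp only [riccatiLHS]; abel
      rw [hsplit] at h0
      linear_combination (norm := abel) h0
    have hdP'val : dP' t = -(riccatiLHS n k (Atil t) (Ctil t) (Ltil t) (B t) (D t) (S t)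
        (F t) (R₁ t) (R₂ t) (m₁ t) (m₂ t) lam' (P' t) 0) := by
      have h0 := heq' t hx'
      have hsplit : riccatiLHS n k (Atil t) (Ctil t) (Ltil t) (B t) (D t) (S t)
          (F t) (R₁ t) (R₂ t) (m₁ t) (m₂ t) lam' (P' t) (dP' t)
          = dP' t + riccatiLHS n k (Atil t) (Ctil t) (Ltil t) (B t) (D t) (S t)
            (F t) (R₁ t) (R₂ t) (m₁ t) (m₂ t) lam' (P' t) 0 := by
        simp only [riccatiLHS]; abel
      rw [hsplit] at h0
      linear_combination (norm := abel) h0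
    have hkey := key_lipschitz n k M δ hδ (Atil t) (Ctil t) (Ltil t) (P t) (P' t)
      (B t) (D t) (S t) (F t) (m₁ t) (m₂ t) lam lam' (R₁ t) (R₂ t)
      hA hC hL hB hD hS hF hR₁ hR₂ hm₁ hm₂ hlam hlam' (hPs t hx').2 (hP's t hx').2
      (hVP t hx').1 (hVP t hx').2 (hVP' t hx').1 (hVP' t hx').2
    have hnorm : ‖(-1 : ℝ) • (dP t - dP' t)‖
        = ‖riccatiLHS n k (Atil t) (Ctil t) (Ltil t) (B t) (D t) (S t)
            (F t) (R₁ t) (R₂ t) (m₁ t) (m₂ t) lam (P t) 0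
          - riccatiLHS n k (Atil t) (Ctil t) (Ltil t) (B t) (D t) (S t)
            (F t) (R₁ t) (R₂ t) (m₁ t) (m₂ t) lam' (P' t) 0‖ := by
      rw [hdPval, hdP'val]
      rw [show (-1 : ℝ) • (-(riccatiLHS n k (Atil t) (Ctil t) (Ltil t) (B t) (D t) (S t)
          (F t) (R₁ t) (R₂ t) (m₁ t) (m₂ t) lam (P t) 0)
          - -(riccatiLHS n k (Atil t) (Ctil t) (Ltil t) (B t) (D t) (S t)
          (F t) (R₁ t) (R₂ t) (m₁ t) (m₂ t) lam' (P' t) 0))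
        = riccatiLHS n k (Atil t) (Ctil t) (Ltil t) (B t) (D t) (S t)
            (F t) (R₁ t) (R₂ t) (m₁ t) (m₂ t) lam (P t) 0
          - riccatiLHS n k (Atil t) (Ctil t) (Ltil t) (B t) (D t) (S t)
            (F t) (R₁ t) (R₂ t) (m₁ t) (m₂ t) lam' (P' t) 0 from by
          simp [neg_smul, one_smul]; abel]
    have hgx : ‖g x‖ = ‖P t - P' t‖ := by rw [hgdef]
    rw [hnorm, hgx]
    have hKc0 : Kc μ M (1/δ) ≤ K := by rw [hKdef]; linarith
    have hPP0 : (0:ℝ) ≤ ‖P t - P' t‖ := norm_nonneg _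
    calc ‖_ - _‖ ≤ Kc μ M (1/δ) * (‖P t - P' t‖ + d) := hkey
      _ ≤ K * (‖P t - P' t‖ + d) := by
          apply mul_le_mul_of_nonneg_right hKc0; positivity
      _ = K * ‖P t - P' t‖ + K * d := by ring
  -- Gronwall
  have hgron := norm_le_gronwallBound_of_norm_deriv_right_le (δ := μ*d*M) (K := K)
    (ε := K*d) (a := 0) (b := T) hgc hgd (by simpa using hg0) hbound
  intro t ht
  have hTt : T - t ∈ Icc (0:ℝ) T := ⟨by linarith [ht.2], by linarith [ht.1]⟩
  have h1 := hgron (T - t) hTt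
  have h2 : ‖P t - P' t‖ = ‖g (T - t)‖ := by
    rw [hgdef]
    simp only [sub_sub_cancel]
  rw [h2, hddef] at *
  refine h1.trans ?_
  rw [gronwallBound_of_K_ne_0 (ne_of_gt hKpos)]
  have hy0 : (0:ℝ) ≤ T - t - 0 := by simpa using hTt.1
  have hyT : T - t - 0 ≤ T := by simpa using hTt.2
  have hexp : Real.exp (K * (T - t - 0)) ≤ Real.exp (K * T) :=
    Real.exp_le_exp.mpr (mul_le_mul_of_nonneg_left (by linarith) hKpos.le)
  have hexp0 : (0:ℝ) < Real.exp (K * (T - t - 0)) := Real.exp_pos _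
  have hd0' : (0:ℝ) ≤ |lam - lam'| := abs_nonneg _
  have hKdK : K * |lam - lam'| / K = |lam - lam'| := by
    field_simp
  rw [hKdK]
  have e1 : μ * |lam - lam'| * M * Real.exp (K * (T - t - 0))
      ≤ μ * |lam - lam'| * M * Real.exp (K * T) := by
    apply mul_le_mul_of_nonneg_left hexp (by positivity)
  have e2 : |lam - lam'| * (Real.exp (K * (T - t - 0)) - 1)
      ≤ |lam - lam'| * Real.exp (K * T) := by
    apply mul_le_mul_of_nonneg_left (by linarith) hd0'
  calc μ * |lam - lam'| * M * Real.exp (K * (T - t - 0))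
        + |lam - lam'| * (Real.exp (K * (T - t - 0)) - 1)
      ≤ μ * |lam - lam'| * M * Real.exp (K * T) + |lam - lam'| * Real.exp (K * T) := by
        linarith
    _ = (μ * M + 1) * Real.exp (K * T) * |lam - lam'| := by ring
end
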